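/- arXiv:1711.03413 — 6 statements merged into one kernel-verified Lean document; each statement's English description precedes it below -/
import Mathlib

section
/- Let n ≥ 0 and d ≥ 2 be integers, let h = x₀^d + ⋯ + x_{n+1}^d ∈ ℂ[x₀,…,x_{n+1}] be the Fermat polynomial of degree d, and let M = ℂ[x₀,…,x_{n+1}]/J(h) be its Milnor algebra. Then M has the maximal rank property: for every integer k ≥ 0 there exists a homogeneous polynomial f of degree k such that for every integer i ≥ 0 the ℂ-linear multiplication map ×f : M_i → M_{i+k} is injective or surjective. -/
open MvPolynomial

/-- The degree-`i` graded piece of the quotient algebra `R/I`, where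
`R = ℂ[x₀,…,x_{n+1}]` is graded by total degree: the image of the space of
homogeneous polynomials of degree `i` under the quotient map. -/
noncomputable def gradedPiece {m : ℕ} (I : Ideal (MvPolynomial (Fin m) ℂ)) (i : ℕ) :
    Submodule ℂ (MvPolynomial (Fin m) ℂ ⧸ I) :=
  (homogeneousSubmodule (Fin m) ℂ i).map (Ideal.Quotient.mkₐ ℂ I).toLinearMap

/-!
Since `∂h/∂xⱼ = d xⱼ^(d-1)`, the Milnor algebra is `M = ℂ[x]/(xⱼ^(m+1))` with `m = d - 2`, whose
socle sits in degree `D = (n + 2) m`. Multiplication by `L = ∑ xⱼ` is the raising operator `E`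
of an `sl₂`-action on `M`: the operator `F = ∑ⱼ ∂ⱼ (m + 1 - xⱼ ∂ⱼ)` preserves the ideal, and
`[F, L] = D - 2 i` on polynomials of degree `i`. For any such graded `sl₂`-action, applying `F`
to `E^(k+1) v = 0` and inducting on the degree shows that `E^k : M_i → M_{i+k}` is injective when
`2 i + k ≤ D`; by the symmetry `E ↔ F`, `i ↔ D - i` the map `F^k` is injective in the opposite
range, so `E^(D-2a) : M_a → M_{D-a}` is an isomorphism, and for `2 i + k ≥ D` the map `E^k` is
surjective as the last factor of such an isomorphism. Hence `f = L^k` works.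
-/

noncomputable section

/-- A grading of an `sl₂`-module by the eigenvalues `2 i - D` of `H = [E, F]`, concentrated in
degrees `0, …, D`. -/
structure Sl2Grading (K W : Type*) [Field K] [AddCommGroup W] [Module K W] where
  V : ℤ → Submodule K W
  D : ℕ
  E : Module.End K W
  F : Module.End K W
  E_mem : ∀ {i : ℤ} {v : W}, v ∈ V i → E v ∈ V (i + 1)
  F_mem : ∀ {i : ℤ} {v : W}, v ∈ V i → F v ∈ V (i - 1)
  V_eq_bot_of_neg : ∀ {i : ℤ}, i < 0 → V i = ⊥
  V_eq_bot_of_gt : ∀ {i : ℤ}, D < i → V i = ⊥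
  F_E : ∀ {i : ℤ} {v : W}, v ∈ V i → F (E v) = E (F v) + ((D : K) - 2 * i) • v

namespace Sl2Grading

variable {K W : Type*} [Field K] [AddCommGroup W] [Module K W] (S : Sl2Grading K W)

def mirror : Sl2Grading K W where
  V i := S.V (S.D - i)
  D := S.D
  E := S.F
  F := S.E
  E_mem hv := by convert S.F_mem hv using 2; ring
  F_mem hv := by convert S.E_mem hv using 2; ring
  V_eq_bot_of_neg hi := S.V_eq_bot_of_gt (by omega)
  V_eq_bot_of_gt hi := S.V_eq_bot_of_neg (by omega)
  F_E hv := by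
    rw [S.F_E hv]
    push_cast
    module

lemma E_pow_mem {i : ℤ} {v : W} (hv : v ∈ S.V i) (k : ℕ) : (S.E ^ k) v ∈ S.V (i + k) := by
  induction k with
  | zero => simpa using hv
  | succ k ih =>
    rw [pow_succ', Module.End.mul_apply]
    convert S.E_mem ih using 2
    push_cast
    ring

lemma F_pow_mem {i : ℤ} {v : W} (hv : v ∈ S.V i) (k : ℕ) : (S.F ^ k) v ∈ S.V (i - k) := by
  have h := S.mirror.E_pow_mem (i := S.D - i) (by simpa [mirror] using hv) k
  simp only [mirror] at h
  convert h using 2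
  ring

lemma F_E_pow_succ {i : ℤ} {v : W} (hv : v ∈ S.V i) (k : ℕ) :
    S.F ((S.E ^ (k + 1)) v) =
      (S.E ^ (k + 1)) (S.F v) + (((k : K) + 1) * (S.D - 2 * i - k)) • (S.E ^ k) v := by
  have pow_succ_apply (j : ℕ) (w : W) : (S.E ^ (j + 1)) w = S.E ((S.E ^ j) w) := by
    rw [pow_succ', Module.End.mul_apply]
  induction k with
  | zero => simpa using S.F_E hv
  | succ k ih =>
    rw [pow_succ_apply (k + 1), S.F_E (S.E_pow_mem hv (k + 1)), ih, map_add, map_smul,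
      ← pow_succ_apply, ← pow_succ_apply]
    push_cast
    module

theorem eq_zero_of_E_pow_eq_zero [CharZero K] {i : ℤ} {k : ℕ} (hk : 2 * i + k ≤ S.D) {v : W}
    (hv : v ∈ S.V i) (hE : (S.E ^ k) v = 0) : v = 0 := by
  obtain ⟨N, hN⟩ : ∃ N : ℕ, i < N := ⟨i.toNat + 1, by omega⟩
  induction N generalizing i k v with
  | zero => simpa [S.V_eq_bot_of_neg (by omega : i < 0)] using hv
  | succ N ihN =>
    induction k generalizing v with
    | zero => simpa using hE
    | succ k ihk =>
      have hc : ((k : K) + 1) * (S.D - 2 * i - k) ≠ 0 := mul_ne_zero k.cast_add_one_ne_zero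
        (by exact_mod_cast (by omega : (S.D - 2 * i - k : ℤ) ≠ 0))
      -- `E^(k+1) (F v) = -c • E^k v`, so `E^(k+2) (F v) = 0` and `F v = 0` by induction on `i`.
      have hexch := S.F_E_pow_succ hv k
      rw [hE, map_zero] at hexch
      have hFv : S.F v = 0 := by
        refine ihN (k := k + 2) (by omega) (S.F_mem hv) ?_ (by omega)
        rw [pow_succ', Module.End.mul_apply, eq_neg_of_add_eq_zero_left hexch.symm, map_neg,
          map_smul, ← Module.End.mul_apply, ← pow_succ', hE, smul_zero, neg_zero]
      rw [hFv, map_zero, zero_add, eq_comm, smul_eq_zero] at hexch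
      exact ihk (by omega) hv (hexch.resolve_left hc)

theorem eq_zero_of_F_pow_eq_zero [CharZero K] {i : ℤ} {k : ℕ} (hk : S.D ≤ 2 * i + k) {v : W}
    (hv : v ∈ S.V (i + k)) (hF : (S.F ^ k) v = 0) : v = 0 :=
  S.mirror.eq_zero_of_E_pow_eq_zero (i := S.D - (i + k)) (by simp only [mirror]; omega)
    (by simpa [mirror] using hv) hF

lemma exists_E_pow_eq_of_two_mul_add_eq [CharZero K] [∀ i, FiniteDimensional K (S.V i)]
    {a : ℤ} {t : ℕ} (ht : 2 * a + t = S.D) {v : W} (hv : v ∈ S.V (a + t)) :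
    ∃ u ∈ S.V a, (S.E ^ t) u = v := by
  let Et : S.V a →ₗ[K] S.V (a + t) := (S.E ^ t).restrict fun _ hu => S.E_pow_mem hu t
  let Ft : S.V (a + t) →ₗ[K] S.V a :=
    (S.F ^ t).restrict fun _ hu => by simpa using S.F_pow_mem hu t
  have hEt : Function.Injective Et := by
    rw [← LinearMap.ker_eq_bot, Submodule.eq_bot_iff]
    rintro ⟨u, hu⟩ h
    exact Subtype.ext (S.eq_zero_of_E_pow_eq_zero ht.le hu (congrArg Subtype.val h))
  have hFt : Function.Injective Ft := by
    rw [← LinearMap.ker_eq_bot, Submodule.eq_bot_iff]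
    rintro ⟨u, hu⟩ h
    exact Subtype.ext (S.eq_zero_of_F_pow_eq_zero ht.ge hu (congrArg Subtype.val h))
  have hrank := (LinearMap.finrank_le_finrank_of_injective hEt).antisymm
    (LinearMap.finrank_le_finrank_of_injective hFt)
  obtain ⟨⟨u, hu⟩, h⟩ :=
    (LinearMap.injective_iff_surjective_of_finrank_eq_finrank hrank).mp hEt ⟨v, hv⟩
  exact ⟨u, hu, congrArg Subtype.val h⟩

theorem exists_E_pow_eq [CharZero K] [∀ i, FiniteDimensional K (S.V i)] {i : ℤ} {k : ℕ}
    (hk : S.D ≤ 2 * i + k) {v : W} (hv : v ∈ S.V (i + k)) : ∃ u ∈ S.V i, (S.E ^ k) u = v := by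
  by_cases hv0 : S.D < i + k
  · exact ⟨0, zero_mem _, by simpa [S.V_eq_bot_of_gt hv0, eq_comm] using hv⟩
  -- `E^k` is the last factor of the isomorphism `E^(s+k) : V (D - i - k) → V (i + k)`.
  obtain ⟨s, hs⟩ : ∃ s : ℕ, (s : ℤ) = 2 * i + k - S.D := ⟨(2 * i + k - S.D).toNat, by omega⟩
  obtain ⟨w, hw, rfl⟩ := S.exists_E_pow_eq_of_two_mul_add_eq (a := S.D - i - k) (t := s + k)
    (by push_cast; omega) (by convert hv using 2; push_cast; omega)
  refine ⟨(S.E ^ s) w, by convert S.E_pow_mem hw s using 2; omega, ?_⟩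
  rw [← Module.End.mul_apply, ← pow_add, add_comm]

theorem injOn_or_surjOn [CharZero K] [∀ i, FiniteDimensional K (S.V i)] (i : ℤ) (k : ℕ) :
    Set.InjOn (S.E ^ k) (S.V i) ∨ Set.SurjOn (S.E ^ k) (S.V i) (S.V (i + k)) := by
  rcases le_total (2 * i + k) S.D with hk | hk
  · refine Or.inl fun u hu v hv huv => sub_eq_zero.mp ?_
    exact S.eq_zero_of_E_pow_eq_zero hk (sub_mem hu hv) (by rw [map_sub, huv, sub_self])
  · exact Or.inr fun v hv => S.exists_E_pow_eq hk hv

end Sl2Grading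

namespace MvPolynomial

variable {σ K : Type*} [Field K] {m : ℕ}

variable (σ K m) in
def varPowIdeal : Ideal (MvPolynomial σ K) :=
  Ideal.span (Set.range fun j => X j ^ (m + 1))

theorem mem_varPowIdeal_iff {p : MvPolynomial σ K} :
    p ∈ varPowIdeal σ K m ↔ ∀ a ∈ p.support, ∃ j, m < a j := by
  have hgen : Set.range (fun j : σ => (X j : MvPolynomial σ K) ^ (m + 1)) =
      (fun s => monomial s 1) '' Set.range fun j => Finsupp.single j (m + 1) := by
    rw [← Set.range_comp]
    simp only [Function.comp_def, X_pow_eq_monomial]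
  simp only [varPowIdeal, hgen, mem_ideal_span_monomial_image, Set.exists_range_iff,
    Finsupp.single_le_iff, Nat.lt_iff_add_one_le]

theorem mem_varPowIdeal_of_isHomogeneous [Fintype σ] {p : MvPolynomial σ K} {n : ℕ}
    (hp : p.IsHomogeneous n) (hn : Fintype.card σ * m < n) : p ∈ varPowIdeal σ K m := by
  refine mem_varPowIdeal_iff.mpr fun a ha => ?_
  by_contra! h
  have hdeg : a.degree = n := by
    rw [Finsupp.degree_eq_weight_one]
    exact hp (mem_support_iff.mp ha)
  have : a.degree ≤ Fintype.card σ * m := by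
    rw [Finsupp.degree_eq_sum]
    simpa using Finset.sum_le_sum fun j (_ : j ∈ Finset.univ) => h j
  omega

variable (m) in
theorem span_range_pderiv_sum_X_pow [Fintype σ] [CharZero K] :
    Ideal.span (Set.range fun i : σ => pderiv i (∑ j, X j ^ (m + 2) : MvPolynomial σ K)) =
      varPowIdeal σ K m := by
  classical
  have hpderiv (i : σ) : pderiv i (∑ j, X j ^ (m + 2) : MvPolynomial σ K) =
      (C ((m : K) + 2) : MvPolynomial σ K) • X i ^ (m + 1) := by
    simp [Derivation.leibniz_pow, pderiv_X, Pi.single_apply, map_ofNat]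
  have hunit : IsUnit (C ((m : K) + 2) : MvPolynomial σ K) :=
    (isUnit_iff_ne_zero.mpr (by norm_cast)).map C
  simp_rw [hpderiv, Set.range_smul]
  exact Submodule.span_smul_eq_of_isUnit _ _ hunit

variable (σ K) in
lemma isHomogeneous_sum_X [Fintype σ] : (∑ j, X j : MvPolynomial σ K).IsHomogeneous 1 :=
  IsHomogeneous.sum _ _ 1 fun j _ => isHomogeneous_X K j

variable (m) in
/-- `∂ⱼ ∘ (m + 1 - xⱼ ∂ⱼ)` sends `xⱼ^t` to `t (m + 1 - t) xⱼ^(t-1)`: the lowering operator of the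
irreducible `sl₂`-module `K[xⱼ]/(xⱼ^(m+1))`. -/
def lowerAt (j : σ) : MvPolynomial σ K →ₗ[K] MvPolynomial σ K :=
  (pderiv j).toLinearMap ∘ₗ
    ((m + 1) • LinearMap.id - LinearMap.mulLeft K (X j) ∘ₗ (pderiv j).toLinearMap)

lemma lowerAt_apply (j : σ) (p : MvPolynomial σ K) :
    lowerAt m j p = pderiv j ((m + 1) • p - X j * pderiv j p) := rfl

lemma lowerAt_mul_of_pderiv_eq_zero {j : σ} {q : MvPolynomial σ K} (hq : pderiv j q = 0)
    (p : MvPolynomial σ K) : lowerAt m j (q * p) = q * lowerAt m j p := by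
  simp only [lowerAt_apply, map_sub, map_add, map_zero, Derivation.leibniz, hq,
    Derivation.map_natCast, smul_eq_mul, nsmul_eq_mul]
  ring

lemma lowerAt_X_mul_self (j : σ) (p : MvPolynomial σ K) :
    lowerAt m j (X j * p) =
      X j * lowerAt m j p + (m : MvPolynomial σ K) * p - 2 * (X j * pderiv j p) := by
  simp only [lowerAt_apply, map_sub, map_add, Derivation.leibniz, pderiv_X_self,
    Derivation.map_natCast, Derivation.map_one_eq_zero, smul_eq_mul, nsmul_eq_mul, Nat.cast_add,
    Nat.cast_one, mul_one, mul_zero, add_zero]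
  ring

lemma lowerAt_X_pow_mul_self (j : σ) (p : MvPolynomial σ K) :
    lowerAt m j (X j ^ (m + 1) * p) = X j ^ (m + 1) *
      -(((m : MvPolynomial σ K) + 2) * pderiv j p + X j * pderiv j (pderiv j p)) := by
  -- split off `m = 0` so that `leibniz_pow` produces no truncated exponent `m - 1`
  obtain _ | m := m <;>
  · simp only [lowerAt_apply, map_sub, map_add, Derivation.leibniz, Derivation.leibniz_pow,
      pderiv_X_self, Derivation.map_natCast, Derivation.map_one_eq_zero, smul_eq_mul,
      nsmul_eq_mul, add_tsub_cancel_right, Nat.cast_add, Nat.cast_one, Nat.cast_zero, mul_one,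
      mul_zero, add_zero, zero_add, pow_one]
    ring

lemma lowerAt_mem_varPowIdeal [Fintype σ] {p : MvPolynomial σ K} (hp : p ∈ varPowIdeal σ K m)
    (j : σ) : lowerAt m j p ∈ varPowIdeal σ K m := by
  obtain ⟨c, rfl⟩ := Ideal.mem_span_range_iff_exists_fun.mp hp
  rw [map_sum]
  refine Submodule.sum_mem _ fun l _ => ?_
  have hgen : (X l ^ (m + 1) : MvPolynomial σ K) ∈ varPowIdeal σ K m := Ideal.subset_span ⟨l, rfl⟩
  rw [mul_comm]
  rcases eq_or_ne l j with rfl | hlj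
  · rw [lowerAt_X_pow_mul_self]
    exact Ideal.mul_mem_right _ _ hgen
  · rw [lowerAt_mul_of_pderiv_eq_zero
      (by rw [Derivation.leibniz_pow, pderiv_X_of_ne hlj, smul_zero, smul_zero])]
    exact Ideal.mul_mem_right _ _ hgen

lemma IsHomogeneous.lowerAt {p : MvPolynomial σ K} {n : ℕ} (hp : p.IsHomogeneous (n + 1))
    (j : σ) : (lowerAt m j p).IsHomogeneous n := by
  have h : ((m + 1) • p - X j * pderiv j p).IsHomogeneous (n + 1) := by
    refine Submodule.sub_mem _
      (Submodule.smul_of_tower_mem _ _ ((mem_homogeneousSubmodule _ _).mpr hp)) ?_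
    simpa [add_comm] using (isHomogeneous_X K j).mul (hp.pderiv (i := j))
  exact h.pderiv

lemma lowerAt_eq_zero_of_isHomogeneous_zero {p : MvPolynomial σ K} (hp : p.IsHomogeneous 0)
    (j : σ) : lowerAt m j p = 0 := by
  rw [← totalDegree_zero_iff_isHomogeneous, totalDegree_eq_zero_iff_eq_C] at hp
  rw [hp, lowerAt_apply]
  simp

lemma lowerAt_sum_X_mul [Fintype σ] (j : σ) (p : MvPolynomial σ K) :
    lowerAt m j ((∑ l, X l) * p) =
      (∑ l, X l) * lowerAt m j p + (m : MvPolynomial σ K) * p - 2 * (X j * pderiv j p) := by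
  classical
  simp only [Finset.sum_mul, map_sum]
  rw [← Finset.add_sum_erase _ _ (Finset.mem_univ j),
    ← Finset.add_sum_erase _ _ (Finset.mem_univ j), lowerAt_X_mul_self,
    Finset.sum_congr rfl fun l hl => lowerAt_mul_of_pderiv_eq_zero (m := m)
      (pderiv_X_of_ne (Finset.ne_of_mem_erase hl)) p]
  ring

variable (m) in
def lowering [Fintype σ] : MvPolynomial σ K →ₗ[K] MvPolynomial σ K :=
  ∑ j, lowerAt m j

section lowering

variable [Fintype σ] {p : MvPolynomial σ K}

lemma lowering_sum_X_mul {n : ℕ} (hp : p.IsHomogeneous n) :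
    lowering m ((∑ l, X l) * p) =
      (∑ l, X l) * lowering m p + ((Fintype.card σ * m : K) - 2 * n) • p := by
  simp only [lowering, LinearMap.sum_apply, lowerAt_sum_X_mul, Finset.sum_sub_distrib,
    Finset.sum_add_distrib, ← Finset.mul_sum, hp.sum_X_mul_pderiv, Finset.sum_const,
    Finset.card_univ, nsmul_eq_mul, smul_eq_C_mul, map_sub, map_mul, map_natCast, map_ofNat]
  ring

lemma lowering_mem_varPowIdeal (hp : p ∈ varPowIdeal σ K m) : lowering m p ∈ varPowIdeal σ K m := by
  simp only [lowering, LinearMap.sum_apply]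
  exact Submodule.sum_mem _ fun j _ => lowerAt_mem_varPowIdeal hp j

lemma IsHomogeneous.lowering {n : ℕ} (hp : p.IsHomogeneous (n + 1)) :
    (lowering m p).IsHomogeneous n := by
  simp only [MvPolynomial.lowering, LinearMap.sum_apply]
  exact IsHomogeneous.sum _ _ _ fun j _ => hp.lowerAt j

lemma lowering_eq_zero_of_isHomogeneous_zero (hp : p.IsHomogeneous 0) : lowering m p = 0 := by
  simp [lowering, lowerAt_eq_zero_of_isHomogeneous_zero hp]

end lowering

variable (K) in
def quotientGrading (J : Ideal (MvPolynomial σ K)) (i : ℤ) :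
    Submodule K (MvPolynomial σ K ⧸ J) :=
  if 0 ≤ i then (homogeneousSubmodule σ K i.toNat).map (Ideal.Quotient.mkₐ K J).toLinearMap else ⊥

section quotientGrading

variable {J : Ideal (MvPolynomial σ K)}

lemma quotientGrading_natCast (n : ℕ) : quotientGrading K J n =
    (homogeneousSubmodule σ K n).map (Ideal.Quotient.mkₐ K J).toLinearMap := by
  simp [quotientGrading]

lemma quotientGrading_of_neg {i : ℤ} (hi : i < 0) : quotientGrading K J i = ⊥ := by
  simp [quotientGrading, hi]

lemma mkₐ_mem_quotientGrading {p : MvPolynomial σ K} {n : ℕ} (hp : p.IsHomogeneous n) :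
    Ideal.Quotient.mkₐ K J p ∈ quotientGrading K J n := by
  rw [quotientGrading_natCast]
  exact ⟨p, hp, rfl⟩

@[elab_as_elim]
lemma quotientGrading_induction {P : ℤ → MvPolynomial σ K ⧸ J → Prop} (zero : ∀ i, P i 0)
    (mkₐ : ∀ (n : ℕ) (p : MvPolynomial σ K), p.IsHomogeneous n → P n (Ideal.Quotient.mkₐ K J p))
    {i : ℤ} {v : MvPolynomial σ K ⧸ J} (hv : v ∈ quotientGrading K J i) : P i v := by
  rcases lt_or_ge i 0 with hi | hi
  · rw [quotientGrading_of_neg hi, Submodule.mem_bot] at hv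
    exact hv ▸ zero i
  · lift i to ℕ using hi
    rw [quotientGrading_natCast] at hv
    obtain ⟨p, hp, rfl⟩ := hv
    exact mkₐ i p hp

instance [Finite σ] (i : ℤ) : FiniteDimensional K (quotientGrading K J i) := by
  rcases lt_or_ge i 0 with hi | hi
  · rw [quotientGrading_of_neg hi]
    infer_instance
  · lift i to ℕ using hi
    rw [quotientGrading_natCast]
    exact Module.Finite.iff_fg.mpr ((homogeneousSubmodule_fg σ K i).map _)

end quotientGrading

variable [Fintype σ]

variable (σ K m) in
def loweringQuot : Module.End K (MvPolynomial σ K ⧸ varPowIdeal σ K m) :=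
  (Submodule.restrictScalars K (varPowIdeal σ K m)).mapQ
    (Submodule.restrictScalars K (varPowIdeal σ K m)) (lowering m)
    fun _ hp => lowering_mem_varPowIdeal hp

lemma loweringQuot_mkₐ (p : MvPolynomial σ K) :
    loweringQuot σ K m (Ideal.Quotient.mkₐ K _ p) = Ideal.Quotient.mkₐ K _ (lowering m p) := rfl

variable (σ K m) in
def varPowSl2 : Sl2Grading K (MvPolynomial σ K ⧸ varPowIdeal σ K m) where
  V := quotientGrading K (varPowIdeal σ K m)
  D := Fintype.card σ * m
  E := LinearMap.mulLeft K (Ideal.Quotient.mkₐ K _ (∑ j, X j))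
  F := loweringQuot σ K m
  E_mem hv := by
    refine quotientGrading_induction (by simp) (fun n p hp => ?_) hv
    have hLp := (isHomogeneous_sum_X σ K).mul hp
    rw [add_comm] at hLp
    simpa [map_mul] using mkₐ_mem_quotientGrading (J := varPowIdeal σ K m) hLp
  F_mem hv := by
    refine quotientGrading_induction (by simp) (fun n p hp => ?_) hv
    rw [loweringQuot_mkₐ]
    rcases n with _ | n
    · rw [lowering_eq_zero_of_isHomogeneous_zero hp, map_zero]
      exact zero_mem _
    · simpa using mkₐ_mem_quotientGrading (J := varPowIdeal σ K m) hp.lowering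
  V_eq_bot_of_neg := quotientGrading_of_neg
  V_eq_bot_of_gt {i} hi := by
    refine eq_bot_iff.mpr fun v hv => ?_
    refine quotientGrading_induction (P := fun i v => (Fintype.card σ * m : ℤ) < i → v ∈ ⊥)
      (by simp) (fun n p hp hn => ?_) hv hi
    exact (Submodule.mem_bot K).mpr (Ideal.Quotient.eq_zero_iff_mem.mpr
      (mem_varPowIdeal_of_isHomogeneous hp (by omega)))
  F_E hv := by
    refine quotientGrading_induction (by simp) (fun n p hp => ?_) hv
    simp only [LinearMap.mulLeft_apply, ← map_mul, loweringQuot_mkₐ, lowering_sum_X_mul hp,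
      map_add, map_smul]
    push_cast
    rfl

instance (i : ℤ) : FiniteDimensional K ((varPowSl2 σ K m).V i) :=
  inferInstanceAs (FiniteDimensional K (quotientGrading K _ i))

end MvPolynomial

end

/-- The Milnor algebra of the Fermat polynomial `h = x₀^d + ⋯ + x_{n+1}^d` (`d ≥ 2`)
has the maximal rank property: for each `k ≥ 0` there is a homogeneous polynomial `f`
of degree `k` such that all multiplication maps `×f : M_i → M_{i+k}` have maximal rank. -/
theorem mrp_milnor_algebra_fermat
    (n d : ℕ) (hd : 2 ≤ d)
    (h : MvPolynomial (Fin (n + 2)) ℂ) (hh : h = ∑ j, X j ^ d)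
    (J : Ideal (MvPolynomial (Fin (n + 2)) ℂ))
    (hJ : J = Ideal.span (Set.range fun i : Fin (n + 2) => pderiv i h))
    (k : ℕ) :
    ∃ f : MvPolynomial (Fin (n + 2)) ℂ, f.IsHomogeneous k ∧
      ∀ i : ℕ,
        Set.InjOn (fun x => Ideal.Quotient.mk J f * x) (gradedPiece J i) ∨
        Set.SurjOn (fun x => Ideal.Quotient.mk J f * x) (gradedPiece J i)
          (gradedPiece J (i + k)) := by
  obtain ⟨m, rfl⟩ : ∃ m, d = m + 2 := ⟨d - 2, by omega⟩
  subst hh hJ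
  rw [span_range_pderiv_sum_X_pow]
  refine ⟨(∑ j, X j) ^ k, by simpa using (isHomogeneous_sum_X _ ℂ).pow k, fun i => ?_⟩
  have hmax := (varPowSl2 (Fin (n + 2)) ℂ m).injOn_or_surjOn i k
  rw [← Nat.cast_add] at hmax
  simp only [varPowSl2, quotientGrading_natCast, LinearMap.pow_mulLeft, ← map_pow,
    Ideal.Quotient.mkₐ_eq_mk] at hmax
  exact hmax
end

section
/- Let r ≥ 1 and let d₁,…,d_r ≥ 1 be integers, set A = ℂ[x₁,…,x_r]/I with I = ⟨x₁^{d₁},…,x_r^{d_r}⟩ and ρ = (d₁−1) + ⋯ + (d_r−1). Then the multiplication pairing A_j × A_{ρ−j} → A_ρ is nondegenerate: for every integer j with 0 ≤ j ≤ ρ and every homogeneous polynomial a of degree j with a ∉ I, there exists a homogeneous polynomial b of degree ρ − j such that a·b ∉ I (equivalently, the class of a·b is nonzero in A_ρ). (Macaulay duality for the monomial complete intersection.) -/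
open MvPolynomial

/-- Macaulay duality for the monomial complete intersection
`A = ℂ[x₁,…,x_r]/⟨x₁^{d₁},…,x_r^{d_r}⟩`: for `0 ≤ j ≤ ρ = Σ(dᵢ−1)`, the
multiplication pairing `A_j × A_{ρ−j} → A_ρ` is nondegenerate. -/
theorem macaulay_duality_monomial_complete_intersection
    (r : ℕ) (hr : 1 ≤ r) (d : Fin r → ℕ) (hd : ∀ i, 1 ≤ d i)
    (I : Ideal (MvPolynomial (Fin r) ℂ))
    (hI : I = Ideal.span (Set.range fun i => (X i : MvPolynomial (Fin r) ℂ) ^ d i))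
    (ρ : ℕ) (hρ : ρ = ∑ i, (d i - 1))
    (j : ℕ) (hj : j ≤ ρ)
    (a : MvPolynomial (Fin r) ℂ) (ha : a.IsHomogeneous j) (haI : a ∉ I) :
    ∃ b : MvPolynomial (Fin r) ℂ, b.IsHomogeneous (ρ - j) ∧ a * b ∉ I := by
  have hrange : (Set.range fun i => (X i : MvPolynomial (Fin r) ℂ) ^ d i)
      = (fun s => monomial s (1:ℂ)) '' (Set.range fun i => Finsupp.single i (d i)) := by
    rw [← Set.range_comp]
    refine congrArg _ (funext fun i => ?_)
    simp [X_pow_eq_monomial]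
  rw [hI, hrange] at haI ⊢
  rw [mem_ideal_span_monomial_image] at haI
  push_neg at haI
  obtain ⟨m, hm, hmlt⟩ := haI
  have hmi : ∀ i, m i ≤ d i - 1 := by
    intro i
    have h := hmlt (Finsupp.single i (d i)) ⟨i, rfl⟩
    rw [Finsupp.single_le_iff] at h
    have := hd i
    omega
  have hmj : m.degree = j := by rw [Finsupp.degree_eq_weight_one]; exact ha (mem_support_iff.mp hm)
  have hmj' : ∑ i, m i = j := by
    rw [← hmj, Finsupp.degree]
    exact (Finset.sum_subset (Finset.subset_univ _) (by
      intro i _ hi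
      simpa using Finsupp.notMem_support_iff.mp hi)).symm
  set e : Fin r →₀ ℕ := Finsupp.equivFunOnFinite.symm (fun i => d i - 1 - m i) with he
  have hei : ∀ i, e i = d i - 1 - m i := fun i => rfl
  have hedeg : e.degree = ρ - j := by
    have h1 : e.degree = ∑ i, e i := by
      rw [Finsupp.degree]
      exact Finset.sum_subset (Finset.subset_univ _) (by
        intro i _ hi
        simpa using Finsupp.notMem_support_iff.mp hi)
    have h2 : (∑ i, e i) + ∑ i, m i = ∑ i, (d i - 1) := by
      rw [← Finset.sum_add_distrib]
      refine Finset.sum_congr rfl fun i _ => ?_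
      have := hmi i; rw [hei]; omega
    omega
  refine ⟨monomial e 1, isHomogeneous_monomial 1 hedeg, ?_⟩
  rw [mem_ideal_span_monomial_image]
  push_neg
  refine ⟨m + e, ?_, ?_⟩
  · rw [mem_support_iff, coeff_mul_monomial, mul_one]
    exact mem_support_iff.mp hm
  · rintro s ⟨i, rfl⟩
    rw [Finsupp.single_le_iff]
    have := hmi i; have := hd i
    simp only [Finsupp.add_apply, hei]
    omega
end

section
/- Let r ≥ 2 and e ≥ 1 be integers. For an integer j ≥ 0 let N_j denote the number of tuples v : {1,…,r} → ℕ with v(i) ≤ e for all i and v(1) + ⋯ + v(r) = j (equivalently, the coefficient of t^j in (1 + t + ⋯ + t^e)^r). Then N_j < N_{j+1} for every integer j ≥ 0 with 2(j+1) ≤ r·e. (The Hilbert function of ℂ[x₁,…,x_r]/⟨x₁^{e+1},…,x_r^{e+1}⟩ is strictly increasing on the interval [0, ρ/2], where ρ = r·e.) -/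
/-!
Let `a_r(j)` be the coefficient of `t^j` in `q^r`, `q = 1 + t + ⋯ + t^e`. The identity
`(1 - t) q = 1 - t^(e+1)` gives `a_{r+1}(j+1) - a_{r+1}(j) = a_r(j+1) - a_r(j-e)`, and
`v ↦ e - v` shows `a_r(j) = a_r(re - j)`. With this symmetry, induction on `r` yields
`a_r(m) ≤ a_r(n)` whenever `m ≤ n` and `m + n ≤ re`. Strictness for `r ≥ 2` follows by a second
induction: the correction term satisfies `a_r(j-e) < a_r(j-e+1) ≤ a_r(j+1)`.
-/

open Finset Polynomial

theorem le_of_symm_of_le_succ {α : Type*} [Preorder α] {f : ℕ → α} {R : ℕ}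
    (symm : ∀ n ≤ R, f (R - n) = f n) (step : ∀ k, 2 * (k + 1) ≤ R → f k ≤ f (k + 1))
    {m n : ℕ} (hmn : m ≤ n) (hR : m + n ≤ R) : f m ≤ f n := by
  have mono : MonotoneOn f (Set.Iic (R / 2)) :=
    monotoneOn_of_le_succ Set.ordConnected_Iic fun k _ _ hk => by
      rw [Order.succ_eq_add_one, Set.mem_Iic] at *
      exact step k (by omega)
  rcases le_or_gt n (R / 2) with hn | hn
  · exact mono (by simp; omega) hn hmn
  · rw [← symm n (by omega)]
    exact mono (by simp; omega) (by simp; omega) (by omega)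

def boundedTuples (r e j : ℕ) : Finset (Fin r → ℕ) :=
  {v ∈ Fintype.piFinset fun _ => range (e + 1) | ∑ i, v i = j}

theorem mem_boundedTuples {r e j : ℕ} {v : Fin r → ℕ} :
    v ∈ boundedTuples r e j ↔ (∀ i, v i ≤ e) ∧ ∑ i, v i = j := by
  simp [boundedTuples]

theorem card_boundedTuples_symm {r e j : ℕ} (hj : j ≤ r * e) :
    #(boundedTuples r e (r * e - j)) = #(boundedTuples r e j) := by
  have compl : ∀ {a b}, a + b = r * e → ∀ v ∈ boundedTuples r e a,
      (fun i => e - v i) ∈ boundedTuples r e b := by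
    intro a b hab v hv
    rw [mem_boundedTuples] at hv ⊢
    refine ⟨fun i => Nat.sub_le _ _, ?_⟩
    rw [sum_tsub_distrib _ fun i _ => hv.1 i, hv.2]
    simp only [sum_const, card_univ, Fintype.card_fin, smul_eq_mul]
    omega
  have invol : ∀ {a}, ∀ v ∈ (boundedTuples r e a : Set (Fin r → ℕ)),
      (fun i => e - (e - v i)) = v :=
    fun v hv => funext fun i => Nat.sub_sub_self ((mem_boundedTuples.1 hv).1 i)
  exact card_nbij' _ _ (compl (by omega)) (compl (by omega)) invol invol

noncomputable def hilbertFunction (r e j : ℕ) : ℕ :=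
  ((∑ i ∈ range (e + 1), (X : ℕ[X]) ^ i) ^ r).coeff j

theorem hilbertFunction_eq_card (r e j : ℕ) : hilbertFunction r e j = #(boundedTuples r e j) := by
  rw [hilbertFunction, ← Fin.prod_const, prod_univ_sum, finsetSum_coeff, boundedTuples]
  simp [prod_pow_eq_pow_sum, coeff_X_pow, eq_comm]

theorem hilbertFunction_symm {r e j : ℕ} (hj : j ≤ r * e) :
    hilbertFunction r e (r * e - j) = hilbertFunction r e j := by
  simp only [hilbertFunction_eq_card, card_boundedTuples_symm hj]

theorem hilbertFunction_zero_right (r e : ℕ) : hilbertFunction r e 0 = 1 := by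
  simp [hilbertFunction, coeff_zero_eq_eval_zero, eval_finsetSum]

-- `(1 - X) (1 + X + ⋯ + X^e) = 1 - X^(e+1)`, with both sides moved so that no subtraction occurs.
theorem hilbertFunction_succ_succ_add (r e j : ℕ) :
    hilbertFunction (r + 1) e (j + 1) + (if e ≤ j then hilbertFunction r e (j - e) else 0) =
      hilbertFunction r e (j + 1) + hilbertFunction (r + 1) e j := by
  set q : ℕ[X] := ∑ i ∈ range (e + 1), X ^ i
  have key : q ^ (r + 1) + X ^ (e + 1) * q ^ r = q ^ r + X * q ^ (r + 1) := by
    have : q + X ^ (e + 1) = 1 + X * q := by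
      rw [add_comm, ← geom_sum_succ', geom_sum_succ, add_comm]
    calc q ^ (r + 1) + X ^ (e + 1) * q ^ r = q ^ r * (q + X ^ (e + 1)) := by ring
      _ = q ^ r + X * q ^ (r + 1) := by rw [this]; ring
  have := congrArg (coeff · (j + 1)) key
  simp only [coeff_add, coeff_X_pow_mul', coeff_X_mul, add_le_add_iff_right] at this
  simpa [hilbertFunction, q, Nat.add_sub_add_right] using this

theorem hilbertFunction_le_of_add_le (r e : ℕ) {m n : ℕ} (hmn : m ≤ n) (hR : m + n ≤ r * e) :
    hilbertFunction r e m ≤ hilbertFunction r e n := by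
  induction r generalizing m n with
  | zero =>
    rw [zero_mul] at hR
    rw [show m = n by omega]
  | succ r ih =>
    refine le_of_symm_of_le_succ (fun n hn => hilbertFunction_symm hn) (fun k hk => ?_) hmn hR
    have hdrop :
        (if e ≤ k then hilbertFunction r e (k - e) else 0) ≤ hilbertFunction r e (k + 1) := by
      split_ifs with hek
      · exact ih (by omega) (by rw [add_one_mul] at hk; omega)
      · exact Nat.zero_le _
    have := hilbertFunction_succ_succ_add r e k
    omega

theorem hilbertFunction_pos {r e n : ℕ} (hn : n ≤ r * e) : 0 < hilbertFunction r e n :=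
  calc 0 < hilbertFunction r e 0 := by rw [hilbertFunction_zero_right]; exact one_pos
    _ ≤ hilbertFunction r e n := hilbertFunction_le_of_add_le r e n.zero_le (by omega)

theorem hilbertFunction_lt_succ {r e j : ℕ} (hr : 2 ≤ r) (hj : 2 * (j + 1) ≤ r * e) :
    hilbertFunction r e j < hilbertFunction r e (j + 1) := by
  induction r generalizing j with
  | zero => omega
  | succ r ih =>
    rw [add_one_mul] at hj
    have hdrop :
        (if e ≤ j then hilbertFunction r e (j - e) else 0) < hilbertFunction r e (j + 1) := by
      split_ifs with hej
      · have hr' : 2 ≤ r := by nlinarith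
        calc hilbertFunction r e (j - e) < hilbertFunction r e (j - e + 1) := ih hr' (by omega)
          _ ≤ hilbertFunction r e (j + 1) := hilbertFunction_le_of_add_le r e (by omega) (by omega)
      · exact hilbertFunction_pos (by nlinarith)
    have := hilbertFunction_succ_succ_add r e j
    omega

theorem hilbert_function_strictly_increasing_general
    (r e : ℕ) (hr : 2 ≤ r)
    (N : ℕ → ℕ)
    (hN : ∀ j, N j = Nat.card {v : Fin r → ℕ // (∀ i, v i ≤ e) ∧ ∑ i, v i = j})
    (j : ℕ) (hj : 2 * (j + 1) ≤ r * e) :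
    N j < N (j + 1) := by
  have hN' : ∀ j, N j = hilbertFunction r e j := fun j => by
    rw [hN, hilbertFunction_eq_card, ← Nat.card_eq_finsetCard]
    exact Nat.card_congr (Equiv.subtypeEquivRight fun v => mem_boundedTuples.symm)
  rw [hN', hN']
  exact hilbertFunction_lt_succ hr hj

/-- The number of tuples `v : Fin r → ℕ` with `v i ≤ e` for all `i` and `∑ v i = j`
(the coefficient of `t^j` in `(1 + t + ⋯ + t^e)^r`) is strictly increasing in `j`
on the interval `[0, r·e/2]`, for `r ≥ 2`, `e ≥ 1`. -/
theorem hilbert_function_strictly_increasing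
    (r e : ℕ) (hr : 2 ≤ r) (he : 1 ≤ e)
    (N : ℕ → ℕ)
    (hN : ∀ j, N j = Nat.card {v : Fin r → ℕ // (∀ i, v i ≤ e) ∧ ∑ i, v i = j})
    (j : ℕ) (hj : 2 * (j + 1) ≤ r * e) :
    N j < N (j + 1) :=
  hilbert_function_strictly_increasing_general r e hr N hN j hj
end

section
/- Let N ≥ 1 and e ≥ 1 be integers, set A = ℂ[x₀,…,x_N]/⟨x₀^{e+1},…,x_N^{e+1}⟩ and ρ = e·(N+1). Let f be a homogeneous polynomial of degree k ≥ 0 and suppose that the multiplication map ×f : A_i → A_{i+k} is injective for every integer i ≥ 0 with 2i ≤ ρ − k. Then f is faithful: for every integer i ≥ 0, the multiplication map ×f : A_i → A_{i+k} is injective or surjective; moreover ×f : A_i → A_{i+k} is surjective for every i with 2i ≥ ρ − k. -/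
open MvPolynomial

/-!
`A = ℂ[x₀,…,x_N]/⟨x₀^{e+1},…,x_N^{e+1}⟩` is Artinian Gorenstein: its top piece `A_ρ`
is spanned by `x₀^e ⋯ x_N^e`, and reading off that coefficient gives a functional `φ` for which
`(u, v) ↦ φ (u v)` pairs `A_i` and `A_{ρ-i}` perfectly. Under this duality
`×f : A_i → A_{i+k}` is the transpose of `×f : A_{ρ-i-k} → A_{ρ-i}`, so injectivity of the
latter gives surjectivity of the former; when `2i ≥ ρ - k` we have `2(ρ - i - k) ≤ ρ - k`, so
the hypothesis supplies that injectivity.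
-/

/-- The two pairings give `dim W ≤ dim V ≤ dim (a U) ≤ dim W`. -/
theorem surjOn_mul_of_injOn_of_pairing {K A : Type*} [Field K] [CommRing A] [Algebra K A]
    (φ : A →ₗ[K] K) (a : A) {U V W W' : Submodule K A}
    [FiniteDimensional K U] [FiniteDimensional K V] [FiniteDimensional K W]
    (hU : ∀ u ∈ U, a * u ∈ W) (hV : ∀ v ∈ V, a * v ∈ W')
    (hWV : ∀ w ∈ W, w ≠ 0 → ∃ v ∈ V, φ (w * v) ≠ 0)
    (hW'U : ∀ w ∈ W', w ≠ 0 → ∃ u ∈ U, φ (w * u) ≠ 0)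
    (hinj : Set.InjOn (a * ·) V) :
    Set.SurjOn (a * ·) U W := by
  set B := (LinearMap.mul K A).compr₂ φ
  set aU := U.map (LinearMap.mulLeft K a)
  have haU : aU ≤ W := by
    rintro _ ⟨u, hu, rfl⟩
    exact hU u hu
  have hW_le_V : Module.finrank K W ≤ Module.finrank K V := by
    have hinj : Function.Injective (B.domRestrict₁₂ W V) := by
      rw [← LinearMap.ker_eq_bot, Submodule.eq_bot_iff]
      rintro ⟨w, hw⟩ hker
      by_contra hne
      obtain ⟨v, hv, hφ⟩ := hWV w hw (by simpa using hne)
      exact hφ (LinearMap.congr_fun (LinearMap.mem_ker.mp hker) ⟨v, hv⟩)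
    simpa using LinearMap.finrank_le_finrank_of_injective hinj
  have hV_le_aU : Module.finrank K V ≤ Module.finrank K aU := by
    have hinj : Function.Injective (B.domRestrict₁₂ aU V).flip := by
      rw [← LinearMap.ker_eq_bot, Submodule.eq_bot_iff]
      rintro ⟨v, hv⟩ hker
      have hav : a * v = 0 := by
        by_contra hne
        obtain ⟨u, hu, hφ⟩ := hW'U _ (hV v hv) hne
        refine hφ ?_
        have : φ (a * u * v) = 0 :=
          LinearMap.congr_fun (LinearMap.mem_ker.mp hker) ⟨a * u, u, hu, rfl⟩
        rwa [mul_right_comm] at this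
      simpa using hinj hv V.zero_mem (by simpa using hav)
    simpa using LinearMap.finrank_le_finrank_of_injective hinj
  rw [← Submodule.eq_of_le_of_finrank_le haU (hW_le_V.trans hV_le_aU)]
  rintro _ ⟨u, hu, rfl⟩
  exact ⟨u, hu, rfl⟩

namespace MvPolynomial

theorem mem_ideal_span_X_pow_iff {σ R : Type*} [CommSemiring R] {n : ℕ}
    {p : MvPolynomial σ R} :
    p ∈ Ideal.span (Set.range fun i => (X i : MvPolynomial σ R) ^ n) ↔
      ∀ a ∈ p.support, ∃ i, n ≤ a i := by
  have hgen : (Set.range fun i => (X i : MvPolynomial σ R) ^ n) =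
      (fun s => monomial s (1 : R)) '' Set.range fun i => Finsupp.single i n := by
    rw [← Set.range_comp]
    simp [Function.comp_def, X_pow_eq_monomial]
  simp [hgen, mem_ideal_span_monomial_image, Finsupp.single_le_iff]

theorem IsHomogeneous.degree_eq_of_mem_support {σ R : Type*} [CommSemiring R]
    {p : MvPolynomial σ R} {n : ℕ} (hp : p.IsHomogeneous n) {a : σ →₀ ℕ}
    (ha : a ∈ p.support) : a.degree = n :=
  not_not.mp fun h => mem_support_iff.mp ha (hp.coeff_eq_zero h)

end MvPolynomial

section GradedPiece

variable {m : ℕ} (I : Ideal (MvPolynomial (Fin m) ℂ))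

theorem mem_gradedPiece_iff {i : ℕ} {u : MvPolynomial (Fin m) ℂ ⧸ I} :
    u ∈ gradedPiece I i ↔
      ∃ p : MvPolynomial (Fin m) ℂ, p.IsHomogeneous i ∧ Ideal.Quotient.mk I p = u :=
  Iff.rfl

instance (i : ℕ) : FiniteDimensional ℂ (gradedPiece I i) :=
  Module.Finite.iff_fg.mpr ((homogeneousSubmodule_fg (Fin m) ℂ i).map _)

theorem mk_mul_mem_gradedPiece {f : MvPolynomial (Fin m) ℂ} {k i : ℕ} (hf : f.IsHomogeneous k)
    {u : MvPolynomial (Fin m) ℂ ⧸ I} (hu : u ∈ gradedPiece I i) :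
    Ideal.Quotient.mk I f * u ∈ gradedPiece I (i + k) := by
  obtain ⟨p, hp, rfl⟩ := (mem_gradedPiece_iff I).mp hu
  exact (mem_gradedPiece_iff I).mpr ⟨f * p, add_comm k i ▸ hf.mul hp, map_mul _ _ _⟩

end GradedPiece

section PowerIdeal

variable {m e : ℕ}

noncomputable abbrev powerIdeal (m e : ℕ) : Ideal (MvPolynomial (Fin m) ℂ) :=
  Ideal.span (Set.range fun i => X i ^ (e + 1))

theorem mem_powerIdeal_iff {p : MvPolynomial (Fin m) ℂ} :
    p ∈ powerIdeal m e ↔ ∀ a ∈ p.support, ∃ i, e < a i :=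
  mem_ideal_span_X_pow_iff

theorem MvPolynomial.IsHomogeneous.mem_powerIdeal {p : MvPolynomial (Fin m) ℂ} {d : ℕ}
    (hp : p.IsHomogeneous d) (hd : m * e < d) : p ∈ powerIdeal m e := by
  refine mem_powerIdeal_iff.mpr fun a ha => ?_
  by_contra! hle
  have : a.degree ≤ m * e := by
    simpa [Finsupp.degree_eq_sum] using Finset.sum_le_sum (s := .univ) fun i _ => hle i
  exact hd.not_ge (hp.degree_eq_of_mem_support ha ▸ this)

theorem gradedPiece_powerIdeal_eq_bot {d : ℕ} (hd : m * e < d) :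
    gradedPiece (powerIdeal m e) d = ⊥ := by
  refine (Submodule.eq_bot_iff _).mpr fun u hu => ?_
  obtain ⟨p, hp, rfl⟩ := (mem_gradedPiece_iff _).mp hu
  exact Ideal.Quotient.eq_zero_iff_mem.mpr (hp.mem_powerIdeal hd)

variable (m e) in
noncomputable def socleExponent : Fin m →₀ ℕ :=
  Finsupp.equivFunOnFinite.symm fun _ => e

@[simp] theorem socleExponent_apply (i : Fin m) : socleExponent m e i = e := rfl

theorem degree_socleExponent : (socleExponent m e).degree = m * e := by
  simp [Finsupp.degree_eq_sum]

theorem coeff_socleExponent_eq_zero_of_mem {p : MvPolynomial (Fin m) ℂ}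
    (hp : p ∈ powerIdeal m e) : coeff (socleExponent m e) p = 0 := by
  by_contra h
  obtain ⟨i, hi⟩ := mem_powerIdeal_iff.mp hp _ (mem_support_iff.mpr h)
  exact hi.ne (socleExponent_apply i)

variable (m e) in
noncomputable def socleFunctional : (MvPolynomial (Fin m) ℂ ⧸ powerIdeal m e) →ₗ[ℂ] ℂ :=
  ((powerIdeal m e).restrictScalars ℂ).liftQ (lcoeff ℂ (socleExponent m e))
      (fun _ => coeff_socleExponent_eq_zero_of_mem) ∘ₗ
    (Submodule.Quotient.restrictScalarsEquiv ℂ (powerIdeal m e)).symm.toLinearMap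

@[simp] theorem socleFunctional_mk (p : MvPolynomial (Fin m) ℂ) :
    socleFunctional m e (Ideal.Quotient.mk _ p) = coeff (socleExponent m e) p :=
  rfl

theorem exists_socleFunctional_mul_ne_zero {i : ℕ}
    {u : MvPolynomial (Fin m) ℂ ⧸ powerIdeal m e} (hu : u ∈ gradedPiece (powerIdeal m e) i)
    (hu0 : u ≠ 0) :
    ∃ v ∈ gradedPiece (powerIdeal m e) (m * e - i), socleFunctional m e (u * v) ≠ 0 := by
  obtain ⟨p, hp, rfl⟩ := (mem_gradedPiece_iff _).mp hu
  obtain ⟨a, ha, hle⟩ : ∃ a ∈ p.support, a ≤ socleExponent m e := by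
    by_contra! h
    refine hu0 (Ideal.Quotient.eq_zero_iff_mem.mpr (mem_powerIdeal_iff.mpr fun a ha => ?_))
    simpa [Finsupp.le_def] using h a ha
  have hdeg : a.degree = i := hp.degree_eq_of_mem_support ha
  have hdeg' : (socleExponent m e - a).degree = m * e - i := by
    have := congrArg Finsupp.degree (tsub_add_cancel_of_le hle)
    rw [map_add, degree_socleExponent] at this
    omega
  refine ⟨Ideal.Quotient.mk _ (monomial (socleExponent m e - a) 1),
    (mem_gradedPiece_iff _).mpr ⟨_, isHomogeneous_monomial _ hdeg', rfl⟩, ?_⟩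
  rwa [← map_mul, socleFunctional_mk, coeff_mul_monomial', if_pos tsub_le_self, mul_one,
    tsub_tsub_cancel_of_le hle, ← mem_support_iff]

theorem surjOn_mul_of_injOn {f : MvPolynomial (Fin m) ℂ} {k : ℕ} (hf : f.IsHomogeneous k)
    {i : ℕ} (hik : i + k ≤ m * e)
    (hinj : Set.InjOn (Ideal.Quotient.mk (powerIdeal m e) f * ·)
      (gradedPiece (powerIdeal m e) (m * e - i - k))) :
    Set.SurjOn (Ideal.Quotient.mk (powerIdeal m e) f * ·) (gradedPiece (powerIdeal m e) i)
      (gradedPiece (powerIdeal m e) (i + k)) := by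
  refine surjOn_mul_of_injOn_of_pairing (socleFunctional m e) _
    (fun u => mk_mul_mem_gradedPiece _ hf) (fun v => mk_mul_mem_gradedPiece _ hf)
    (fun w hw hw0 => ?_) (fun w hw hw0 => ?_) hinj
  · simpa [Nat.sub_sub] using exists_socleFunctional_mul_ne_zero hw hw0
  · have := exists_socleFunctional_mul_ne_zero hw hw0
    rwa [show m * e - (m * e - i - k + k) = i by omega] at this

end PowerIdeal

theorem faithful_of_injective_in_low_degrees_general
    (N e : ℕ)
    (I : Ideal (MvPolynomial (Fin (N + 1)) ℂ))
    (hI : I = Ideal.span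
      (Set.range fun i => (X i : MvPolynomial (Fin (N + 1)) ℂ) ^ (e + 1)))
    (ρ : ℕ) (hρ : ρ = e * (N + 1))
    (f : MvPolynomial (Fin (N + 1)) ℂ) (k : ℕ) (hf : f.IsHomogeneous k)
    (hinj : ∀ i : ℕ, (2 * i : ℤ) ≤ (ρ : ℤ) - (k : ℤ) →
      Set.InjOn (fun x => Ideal.Quotient.mk I f * x) (gradedPiece I i)) :
    (∀ i : ℕ,
      Set.InjOn (fun x => Ideal.Quotient.mk I f * x) (gradedPiece I i) ∨
      Set.SurjOn (fun x => Ideal.Quotient.mk I f * x) (gradedPiece I i)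
        (gradedPiece I (i + k))) ∧
    (∀ i : ℕ, (ρ : ℤ) - (k : ℤ) ≤ (2 * i : ℤ) →
      Set.SurjOn (fun x => Ideal.Quotient.mk I f * x) (gradedPiece I i)
        (gradedPiece I (i + k))) := by
  subst hI
  have hρ' : (N + 1) * e = ρ := by rw [hρ, mul_comm]
  have high : ∀ i : ℕ, (ρ : ℤ) - k ≤ 2 * i →
      Set.SurjOn (Ideal.Quotient.mk (powerIdeal (N + 1) e) f * ·)
        (gradedPiece (powerIdeal (N + 1) e) i)
        (gradedPiece (powerIdeal (N + 1) e) (i + k)) := by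
    intro i hi
    by_cases hik : i + k ≤ (N + 1) * e
    · exact surjOn_mul_of_injOn hf hik (hinj _ (by omega))
    · rw [gradedPiece_powerIdeal_eq_bot (d := i + k) (by omega), Submodule.bot_coe,
        Set.surjOn_singleton]
      exact ⟨0, zero_mem _, mul_zero _⟩
  refine ⟨fun i => ?_, high⟩
  by_cases hi : (2 * i : ℤ) ≤ ρ - k
  · exact .inl (hinj i hi)
  · exact .inr (high i (by omega))

/-- For `A = ℂ[x₀,…,x_N]/⟨x₀^{e+1},…,x_N^{e+1}⟩` and `ρ = e(N+1)`: if `f` is homogeneous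
of degree `k` and `×f : A_i → A_{i+k}` is injective for all `i` with `2i ≤ ρ − k`, then `f`
is faithful (all multiplication maps `×f` have maximal rank), and moreover
`×f : A_i → A_{i+k}` is surjective for all `i` with `2i ≥ ρ − k`. -/
theorem faithful_of_injective_in_low_degrees
    (N e : ℕ) (hN : 1 ≤ N) (he : 1 ≤ e)
    (I : Ideal (MvPolynomial (Fin (N + 1)) ℂ))
    (hI : I = Ideal.span
      (Set.range fun i => (X i : MvPolynomial (Fin (N + 1)) ℂ) ^ (e + 1)))
    (ρ : ℕ) (hρ : ρ = e * (N + 1))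
    (f : MvPolynomial (Fin (N + 1)) ℂ) (k : ℕ) (hf : f.IsHomogeneous k)
    (hinj : ∀ i : ℕ, (2 * i : ℤ) ≤ (ρ : ℤ) - (k : ℤ) →
      Set.InjOn (fun x => Ideal.Quotient.mk I f * x) (gradedPiece I i)) :
    (∀ i : ℕ,
      Set.InjOn (fun x => Ideal.Quotient.mk I f * x) (gradedPiece I i) ∨
      Set.SurjOn (fun x => Ideal.Quotient.mk I f * x) (gradedPiece I i)
        (gradedPiece I (i + k))) ∧
    (∀ i : ℕ, (ρ : ℤ) - (k : ℤ) ≤ (2 * i : ℤ) →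
      Set.SurjOn (fun x => Ideal.Quotient.mk I f * x) (gradedPiece I i)
        (gradedPiece I (i + k))) :=
  faithful_of_injective_in_low_degrees_general N e I hI ρ hρ f k hf hinj
end

section
/- Let h ∈ ℂ[x₀,…,x_{n+1}] be a homogeneous polynomial of degree m ≥ 1, let f be a homogeneous polynomial of degree d and g a homogeneous polynomial of degree a, and suppose f₀·∂h/∂x₀ + ⋯ + f_{n+1}·∂h/∂x_{n+1} = g·f + p·h for some polynomials f₀,…,f_{n+1}, p. If the multiplication map ×f : M_a → M_{a+d} on the graded pieces of the Milnor algebra M = ℂ[x₀,…,x_{n+1}]/J(h) is injective, then g lies in the Jacobian ideal J(h), i.e., there exist polynomials g₀,…,g_{n+1} with g = g₀·∂h/∂x₀ + ⋯ + g_{n+1}·∂h/∂x_{n+1}. (Key algebraic step in the extension theorem for twisted vector fields.) -/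
open MvPolynomial

lemma euler_monomial_aux {σ : Type*} [Fintype σ] [DecidableEq σ] (s : σ →₀ ℕ) (c : ℂ) :
    ∑ i, X i * pderiv i (monomial s c) = (((∑ i, s i : ℕ) : ℂ)) • monomial s c := by
  have : ∀ i : σ, X i * pderiv i (monomial s c) = ((s i : ℂ)) • monomial s c := by
    intro i
    rw [pderiv_monomial]
    rcases Nat.eq_zero_or_pos (s i) with h0 | hpos
    · simp [h0]
    · rw [X, monomial_mul, one_mul]
      have : Finsupp.single i 1 + (s - Finsupp.single i 1) = s := by
        rw [add_comm]
        apply tsub_add_cancel_of_le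
        rwa [Finsupp.single_le_iff]
      rw [this, smul_monomial, smul_eq_mul, mul_comm]
  rw [Finset.sum_congr rfl fun i _ => this i, ← Finset.sum_smul]
  norm_cast

lemma euler_identity_aux {σ : Type*} [Fintype σ] (h : MvPolynomial σ ℂ) {m : ℕ}
    (hh : h.IsHomogeneous m) : ∑ i, X i * pderiv i h = (m : ℂ) • h := by
  classical
  conv_lhs => rw [h.as_sum]
  rw [Finset.sum_congr rfl fun i _ => by rw [map_sum, Finset.mul_sum]]
  rw [Finset.sum_comm]
  have : ∀ s ∈ h.support, ∑ i, X i * pderiv i (monomial s (coeff s h))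
      = (m : ℂ) • monomial s (coeff s h) := by
    intro s hs
    rw [euler_monomial_aux]
    congr 2
    have := hh (MvPolynomial.mem_support_iff.mp hs)
    rw [← this]
    rw [Finsupp.weight_apply]
    simp only [Pi.one_apply, smul_eq_mul, mul_one]
    exact (Finsupp.sum_fintype s (fun _ c => c) (fun _ => rfl)).symm
  rw [Finset.sum_congr rfl this, ← Finset.smul_sum, ← h.as_sum]

/-- Key algebraic step in the extension theorem for twisted vector fields: if `h` is
homogeneous of degree `m ≥ 1`, `f` homogeneous of degree `d`, `g` homogeneous of degree
`a`, `Σ fᵢ·∂h/∂xᵢ = g·f + p·h`, and multiplication `×f : M_a → M_{a+d}` on the Milnor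
algebra `M = ℂ[x₀,…,x_{n+1}]/J(h)` is injective, then `g` lies in the Jacobian ideal:
`g = Σ gᵢ·∂h/∂xᵢ` for some polynomials `gᵢ`. -/
theorem mem_jacobian_ideal_of_injective
    (n : ℕ) (h : MvPolynomial (Fin (n + 2)) ℂ) (m : ℕ) (hm : 1 ≤ m)
    (hh : h.IsHomogeneous m)
    (J : Ideal (MvPolynomial (Fin (n + 2)) ℂ))
    (hJ : J = Ideal.span (Set.range fun i : Fin (n + 2) => pderiv i h))
    (f g : MvPolynomial (Fin (n + 2)) ℂ) (d a : ℕ)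
    (hf : f.IsHomogeneous d) (hg : g.IsHomogeneous a)
    (f₀ : Fin (n + 2) → MvPolynomial (Fin (n + 2)) ℂ)
    (p : MvPolynomial (Fin (n + 2)) ℂ)
    (heq : ∑ i, f₀ i * pderiv i h = g * f + p * h)
    (hinj : Set.InjOn (fun x => Ideal.Quotient.mk J f * x) (gradedPiece J a)) :
    ∃ g₀ : Fin (n + 2) → MvPolynomial (Fin (n + 2)) ℂ,
      g = ∑ i, g₀ i * pderiv i h := by
  have hpd : ∀ i, pderiv i h ∈ J := fun i => by
    rw [hJ]; exact Ideal.subset_span ⟨i, rfl⟩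
  have hm0 : (m : ℂ) ≠ 0 := Nat.cast_ne_zero.mpr (by omega)
  have hhJ : h ∈ J := by
    have hsum : (m : ℂ) • h ∈ J := by
      rw [← euler_identity_aux h hh]
      exact Ideal.sum_mem _ fun i _ => Ideal.mul_mem_left _ _ (hpd i)
    rw [smul_eq_C_mul] at hsum
    have : h = C (m : ℂ)⁻¹ * (C (m : ℂ) * h) := by
      rw [← mul_assoc, ← C_mul, inv_mul_cancel₀ hm0, C_1, one_mul]
    rw [this]
    exact Ideal.mul_mem_left _ _ hsum
  have hgf : g * f ∈ J := by
    have : g * f = ∑ i, f₀ i * pderiv i h - p * h := by rw [heq]; ring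
    rw [this]
    exact Submodule.sub_mem _ (Ideal.sum_mem _ fun i _ => Ideal.mul_mem_left _ _ (hpd i))
      (Ideal.mul_mem_left _ _ hhJ)
  have memg : Ideal.Quotient.mk J g ∈ gradedPiece J a :=
    ⟨g, (mem_homogeneousSubmodule _ _).mpr hg, rfl⟩
  have mem0 : (0 : MvPolynomial (Fin (n + 2)) ℂ ⧸ J) ∈ gradedPiece J a :=
    Submodule.zero_mem _
  have key : Ideal.Quotient.mk J g = 0 := by
    apply hinj memg mem0
    show Ideal.Quotient.mk J f * Ideal.Quotient.mk J g = Ideal.Quotient.mk J f * 0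
    rw [mul_zero, ← map_mul, Ideal.Quotient.eq_zero_iff_mem]
    rwa [mul_comm] at hgf
  have hgJ : g ∈ J := (Ideal.Quotient.eq_zero_iff_mem).mp key
  rw [hJ, Ideal.span, Submodule.mem_span_range_iff_exists_fun] at hgJ
  obtain ⟨c, hc⟩ := hgJ
  exact ⟨c, by rw [← hc]; simp [smul_eq_mul]⟩
end

section
/- For every integer ℓ with 1 ≤ ℓ ≤ 4, there is no ℓ-admissible C₄-sequence of weight 9: there is no quadruple of integers (a₁,a₂,a₃,a₄) with |a_i| = i for i = 1,2,3,4, with a_i + a_j ≠ 2ℓ for all 1 ≤ i ≤ j ≤ 4, and with Σ_{a_i > 0} a_i = 9. (This is the combinatorial content, via Snow's algorithm, of the vanishing H^q(Sp(8)/U(4), Ω^9(ℓ)) = 0 for all q ≥ 0 and 1 ≤ ℓ ≤ 4.) -/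
/-- For `1 ≤ ℓ ≤ 4` there is no `ℓ`-admissible `C₄`-sequence of weight `9`:
no quadruple of integers `(a₁,a₂,a₃,a₄)` with `|aᵢ| = i`, `aᵢ + aⱼ ≠ 2ℓ` for all
`1 ≤ i ≤ j ≤ 4`, and sum of positive entries equal to `9`. -/
theorem no_admissible_c4_sequence_weight_nine
    (ℓ : ℤ) (hℓ : 1 ≤ ℓ ∧ ℓ ≤ 4) :
    ¬ ∃ a : Fin 4 → ℤ,
      (∀ i : Fin 4, |a i| = (i : ℤ) + 1) ∧
      (∀ i j : Fin 4, i ≤ j → a i + a j ≠ 2 * ℓ) ∧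
      (∑ i : Fin 4, if 0 < a i then a i else 0) = 9 := by
  rintro ⟨a, h1, h2, h3⟩
  have e0 : a 0 = 1 ∨ a 0 = -1 := abs_eq (by norm_num) |>.mp (by simpa using h1 0)
  have e1 : a 1 = 2 ∨ a 1 = -2 := abs_eq (by norm_num) |>.mp (by simpa using h1 1)
  have e2 : a 2 = 3 ∨ a 2 = -3 := abs_eq (by norm_num) |>.mp (by simpa using h1 2)
  have e3 : a 3 = 4 ∨ a 3 = -4 := abs_eq (by norm_num) |>.mp (by simpa using h1 3)
  have p00 := h2 0 0 (by decide)
  have p01 := h2 0 1 (by decide)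
  have p02 := h2 0 2 (by decide)
  have p03 := h2 0 3 (by decide)
  have p11 := h2 1 1 (by decide)
  have p12 := h2 1 2 (by decide)
  have p13 := h2 1 3 (by decide)
  have p22 := h2 2 2 (by decide)
  have p23 := h2 2 3 (by decide)
  have p33 := h2 3 3 (by decide)
  rw [Fin.sum_univ_four] at h3
  rcases e0 with e0 | e0 <;> rcases e1 with e1 | e1 <;>
    rcases e2 with e2 | e2 <;> rcases e3 with e3 | e3 <;>
    simp [e0, e1, e2, e3] at h3 p00 p01 p02 p03 p11 p12 p13 p22 p23 p33 <;>
    omega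
end
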